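/- Let p be a prime and y an integer coprime to p. Then for all s ≥ 1 and n ≥ 1, Σ_{j=1}^n (y^(p²·j) − y^(p·j))/(pj), viewed as a p-adic number, is a p-adic integer, and satisfies Σ_{j=1}^n (y^(p²j) − y^(pj))/(pj) ≡ Σ_{k=1}^{n} (α^k p^(2k−1)/k!) Σ_{j=1}^n (y^(pj)/j)·j(j−1)⋯(j−k+1) truncated at k = s−1 (mod p^s), where α = (y^(p(p−1)) − 1)/p². -/

import Mathlib

/-! Since `y ^ (p - 1) ≡ 1 [ZMOD p]`, lifting gives `y ^ (p * (p - 1)) = 1 + p ^ 2 * α` with `α` a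
`p`-adic integer. The binomial theorem then expands the `j`-th summand as
`∑ₖ α ^ k p ^ (2k - 1) / k! * (y ^ (p j) / j) * j (j - 1) ⋯ (j - k + 1)`. The falling factorial is
divisible by `j` and `v_p(k!) ≤ k - 1`, so the `k`-th term has norm at most `p ^ (-k)`; by the
ultrametric inequality the whole sum is integral and its tail from `k = s` on has norm at most
`p ^ (-s)`. -/

open Finset

theorem prod_range_natCast_sub_eq_descFactorial {R : Type*} [CommRing R] (j k : ℕ) :
    ∏ i ∈ range k, ((j : R) - i) = j.descFactorial k := by
  rw [← descPochhammer_eval_eq_prod_range, descPochhammer_eval_eq_descFactorial]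

theorem sum_Icc_choose_mul_pow {R : Type*} [CommRing R] (x : R) {j m : ℕ} (hjm : j ≤ m) :
    ∑ k ∈ Icc 1 m, (j.choose k : R) * x ^ k = (1 + x) ^ j - 1 := by
  have hvanish : ∀ k ∈ range (m + 1), k ∉ range (j + 1) → (j.choose k : R) * x ^ k = 0 := by
    intro k _ hk
    rw [Nat.choose_eq_zero_of_lt (by simpa using hk), Nat.cast_zero, zero_mul]
  rw [add_comm, add_pow]
  simp only [one_pow, mul_one]
  simp only [mul_comm (x ^ _)]
  rw [sum_subset (range_subset_range.mpr (by omega)) hvanish, range_eq_Ico,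
    sum_eq_sum_Ico_succ_bot (by omega), zero_add, Ico_add_one_right_eq_Icc]
  simp

theorem mul_one_add_sq_mul_pow_sub_div_eq_sum {K : Type*} [Field K] [CharZero K] (u a c : K)
    (hc : c ≠ 0) {j m : ℕ} (hj : j ≠ 0) (hjm : j ≤ m) :
    (u * (1 + c ^ 2 * a) ^ j - u) / (c * j) =
      ∑ k ∈ Icc 1 m, a ^ k * c ^ (2 * k - 1) / k.factorial *
        (u / j * ∏ i ∈ range k, ((j : K) - i)) := by
  have hterm : ∀ k ∈ Icc 1 m, a ^ k * c ^ (2 * k - 1) / k.factorial *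
      (u / j * ∏ i ∈ range k, ((j : K) - i)) =
        u / (c * j) * ((j.choose k : K) * (c ^ 2 * a) ^ k) := by
    intro k hk
    have hc2 : (c ^ 2) ^ k = c ^ (2 * k - 1) * c := by
      have := (mem_Icc.mp hk).1
      rw [← pow_mul, ← pow_succ, Nat.sub_add_cancel (by omega)]
    rw [prod_range_natCast_sub_eq_descFactorial, Nat.descFactorial_eq_factorial_mul_choose,
      mul_pow, hc2]
    have hjK : (j : K) ≠ 0 := Nat.cast_ne_zero.mpr hj
    have hkK : (k.factorial : K) ≠ 0 := Nat.cast_ne_zero.mpr k.factorial_ne_zero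
    field_simp
    push_cast
    ring
  rw [sum_congr rfl hterm, ← mul_sum, sum_Icc_choose_mul_pow _ hjm]
  ring

theorem pow_sq_mul_sub_pow_mul_div_eq_sum {K : Type*} [Field K] [CharZero K] (x : K) {p j m : ℕ}
    (hp : p ≠ 0) (hj : j ≠ 0) (hjm : j ≤ m) :
    (x ^ (p ^ 2 * j) - x ^ (p * j)) / (p * j) =
      ∑ k ∈ Icc 1 m, ((x ^ (p * (p - 1)) - 1) / (p : K) ^ 2) ^ k * (p : K) ^ (2 * k - 1) /
        k.factorial * (x ^ (p * j) / j * ∏ i ∈ range k, ((j : K) - i)) := by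
  have hpow : x ^ (p ^ 2 * j) = x ^ (p * j) * (x ^ (p * (p - 1))) ^ j := by
    rw [← pow_mul, ← pow_add]
    congr 1
    obtain ⟨q, rfl⟩ : ∃ q, p = q + 1 := ⟨p - 1, by omega⟩
    rw [Nat.add_sub_cancel]
    ring
  rw [← mul_one_add_sq_mul_pow_sub_div_eq_sum _ _ _ (Nat.cast_ne_zero.mpr hp) hj hjm,
    mul_div_cancel₀ _ (by positivity), add_sub_cancel, hpow]

theorem Int.prime_sq_dvd_pow_mul_sub_one_sub_one {p : ℕ} (hp : p.Prime) {y : ℤ}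
    (hy : IsCoprime y p) : (p : ℤ) ^ 2 ∣ y ^ (p * (p - 1)) - 1 := by
  simpa [← pow_mul, mul_comm] using
    dvd_sub_pow_of_dvd_sub (Int.ModEq.pow_card_sub_one_eq_one hp hy).symm.dvd 1

theorem norm_div_natCast_mul_prod_le_one {K : Type*} [NormedField K] [CharZero K]
    [IsUltrametricDist K] {x : K} (hx : ‖x‖ ≤ 1) {j k : ℕ} (hj : j ≠ 0) (hk : k ≠ 0) :
    ‖x / j * ∏ i ∈ range k, ((j : K) - i)‖ ≤ 1 := by
  obtain ⟨j, rfl⟩ : ∃ j', j = j' + 1 := ⟨j - 1, by omega⟩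
  obtain ⟨k, rfl⟩ : ∃ k', k = k' + 1 := ⟨k - 1, by omega⟩
  rw [prod_range_natCast_sub_eq_descFactorial, Nat.succ_descFactorial_succ, Nat.cast_mul,
    ← mul_assoc, div_mul_cancel₀ x (Nat.cast_ne_zero.mpr hj), norm_mul]
  exact mul_le_one₀ hx (norm_nonneg _) (IsUltrametricDist.norm_natCast_le_one K _)

theorem norm_sum_le_zpow_neg_of_le {E : Type*} [SeminormedAddCommGroup E] [IsUltrametricDist E]
    {r : ℝ} (hr : 1 ≤ r) {f : ℕ → E} {s : Finset ℕ} {t : ℕ}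
    (hf : ∀ k ∈ s, ‖f k‖ ≤ r ^ (-(k : ℤ))) (hts : ∀ k ∈ s, t ≤ k) :
    ‖∑ k ∈ s, f k‖ ≤ r ^ (-(t : ℤ)) := by
  refine IsUltrametricDist.norm_sum_le_of_forall_le_of_nonneg (by positivity) fun k hk => ?_
  exact (hf k hk).trans (zpow_le_zpow_right₀ hr (by simpa using hts k hk))

namespace Padic

variable {p : ℕ} [Fact p.Prime]

theorem norm_pow_mul_sub_one_div_sq_le_one {y : ℤ} (hy : IsCoprime y p) :
    ‖((y : ℚ_[p]) ^ (p * (p - 1)) - 1) / (p : ℚ_[p]) ^ 2‖ ≤ 1 := by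
  have hnum : ‖(y : ℚ_[p]) ^ (p * (p - 1)) - 1‖ ≤ (p : ℝ) ^ (-(2 : ℤ)) := by
    exact_mod_cast (norm_int_le_pow_iff_dvd _ 2).mpr
      (Int.prime_sq_dvd_pow_mul_sub_one_sub_one Fact.out hy)
  have hp : (0 : ℝ) < p := by exact_mod_cast (Fact.out : p.Prime).pos
  rw [norm_div, norm_p_pow, div_le_one (by positivity)]
  exact_mod_cast hnum

theorem norm_natCast_eq_zpow_neg_padicValNat {n : ℕ} (hn : n ≠ 0) :
    ‖(n : ℚ_[p])‖ = (p : ℝ) ^ (-(padicValNat p n : ℤ)) := by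
  rw [norm_eq_zpow_neg_valuation (Nat.cast_ne_zero.mpr hn), valuation_natCast]

theorem norm_pow_mul_p_pow_div_factorial_le {a : ℚ_[p]} (ha : ‖a‖ ≤ 1) {k : ℕ} (hk : k ≠ 0) :
    ‖a ^ k * (p : ℚ_[p]) ^ (2 * k - 1) / k.factorial‖ ≤ (p : ℝ) ^ (-(k : ℤ)) := by
  have hp : (1 : ℝ) < p := by exact_mod_cast (Fact.out : p.Prime).one_lt
  have hval : padicValNat p k.factorial ≤ k - 1 := by
    have := padicValNat_factorial_lt_of_ne_zero p hk
    omega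
  rw [norm_div, norm_mul, norm_pow, norm_p_pow,
    norm_natCast_eq_zpow_neg_padicValNat k.factorial_ne_zero, div_eq_mul_inv, ← zpow_neg, neg_neg]
  calc ‖a‖ ^ k * (p : ℝ) ^ (-((2 * k - 1 : ℕ) : ℤ)) * (p : ℝ) ^ (padicValNat p k.factorial : ℤ)
      ≤ 1 * (p : ℝ) ^ (-((2 * k - 1 : ℕ) : ℤ)) * (p : ℝ) ^ ((k - 1 : ℕ) : ℤ) := by
        gcongr
        · exact pow_le_one₀ (norm_nonneg _) ha
        · exact hp.le
    _ = (p : ℝ) ^ (-(k : ℤ)) := by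
        rw [one_mul, ← zpow_add₀ (by positivity)]
        congr 1
        omega

theorem norm_pow_mul_p_pow_div_factorial_mul_sum_le {a : ℚ_[p]} (ha : ‖a‖ ≤ 1) {g : ℕ → ℚ_[p]}
    (hg : ∀ j, ‖g j‖ ≤ 1) {k : ℕ} (hk : k ≠ 0) (n : ℕ) :
    ‖a ^ k * (p : ℚ_[p]) ^ (2 * k - 1) / k.factorial *
      ∑ j ∈ Icc 1 n, g j / j * ∏ i ∈ range k, ((j : ℚ_[p]) - i)‖ ≤ (p : ℝ) ^ (-(k : ℤ)) := by
  rw [norm_mul, ← mul_one ((p : ℝ) ^ (-(k : ℤ)))]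
  refine mul_le_mul (norm_pow_mul_p_pow_div_factorial_le ha hk) ?_ (norm_nonneg _) (by positivity)
  refine IsUltrametricDist.norm_sum_le_of_forall_le_of_nonneg zero_le_one fun j hj => ?_
  exact norm_div_natCast_mul_prod_le_one (hg j) (Nat.one_le_iff_ne_zero.mp (mem_Icc.mp hj).1) hk

end Padic

theorem Gn_not_rel_prime_part_general (p : ℕ) [Fact p.Prime] (y : ℤ)
    (hy : IsCoprime y (p : ℤ)) (s n : ℕ) :
    ‖∑ j ∈ Finset.Icc 1 n,
        ((y : ℚ_[p]) ^ (p ^ 2 * j) - (y : ℚ_[p]) ^ (p * j)) / (p * j)‖ ≤ 1 ∧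
      ‖(∑ j ∈ Finset.Icc 1 n,
            ((y : ℚ_[p]) ^ (p ^ 2 * j) - (y : ℚ_[p]) ^ (p * j)) / (p * j)) -
          ∑ k ∈ Finset.Icc 1 (s - 1),
            (((y : ℚ_[p]) ^ (p * (p - 1)) - 1) / (p : ℚ_[p]) ^ 2) ^ k *
              (p : ℚ_[p]) ^ (2 * k - 1) / (k.factorial : ℚ_[p]) *
              ∑ j ∈ Finset.Icc 1 n,
                ((y : ℚ_[p]) ^ (p * j) / (j : ℚ_[p])) *
                  ∏ i ∈ Finset.range k, ((j : ℚ_[p]) - (i : ℚ_[p]))‖ ≤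
        (p : ℝ) ^ (-(s : ℤ)) := by
  have hp : (1 : ℝ) ≤ p := by exact_mod_cast (Fact.out : p.Prime).one_le
  -- The expansion in `k` is exact to any order `m ≥ n`; `m ≥ s - 1` makes the truncation a sub-sum.
  obtain ⟨m, hnm, hsm⟩ : ∃ m, n ≤ m ∧ s - 1 ≤ m :=
    ⟨max n (s - 1), le_max_left _ _, le_max_right _ _⟩
  set f : ℕ → ℚ_[p] := fun k => (((y : ℚ_[p]) ^ (p * (p - 1)) - 1) / (p : ℚ_[p]) ^ 2) ^ k *
    (p : ℚ_[p]) ^ (2 * k - 1) / (k.factorial : ℚ_[p]) * ∑ j ∈ Icc 1 n,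
      ((y : ℚ_[p]) ^ (p * j) / (j : ℚ_[p])) * ∏ i ∈ range k, ((j : ℚ_[p]) - (i : ℚ_[p])) with hf_def
  have hf : ∀ k ∈ Icc 1 m, ‖f k‖ ≤ (p : ℝ) ^ (-(k : ℤ)) := fun k hk =>
    Padic.norm_pow_mul_p_pow_div_factorial_mul_sum_le (Padic.norm_pow_mul_sub_one_div_sq_le_one hy)
      (fun j => by rw [norm_pow]; exact pow_le_one₀ (norm_nonneg _) (Padic.norm_int_le_one y))
      (Nat.one_le_iff_ne_zero.mp (mem_Icc.mp hk).1) n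
  have hexpand : ∑ j ∈ Icc 1 n, ((y : ℚ_[p]) ^ (p ^ 2 * j) - (y : ℚ_[p]) ^ (p * j)) / (p * j) =
      ∑ k ∈ Icc 1 m, f k := by
    rw [sum_congr rfl fun j hj => pow_sq_mul_sub_pow_mul_div_eq_sum _ (Fact.out : p.Prime).ne_zero
      (Nat.one_le_iff_ne_zero.mp (mem_Icc.mp hj).1) ((mem_Icc.mp hj).2.trans hnm), sum_comm]
    simp_rw [hf_def, mul_sum]
  have hsub : Icc 1 (s - 1) ⊆ Icc 1 m := Icc_subset_Icc_right hsm
  refine ⟨?_, ?_⟩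
  · simpa [hexpand] using norm_sum_le_zpow_neg_of_le hp hf (t := 0) (fun _ _ => Nat.zero_le _)
  · rw [hexpand, ← sum_sdiff hsub, add_sub_cancel_right]
    refine norm_sum_le_zpow_neg_of_le hp (fun k hk => hf k (sdiff_subset hk)) fun k hk => ?_
    simp only [mem_sdiff, mem_Icc] at hk
    omega

theorem Gn_not_rel_prime_part (p : ℕ) [Fact p.Prime] (y : ℤ)
    (hy : IsCoprime y (p : ℤ)) (s n : ℕ) (hs : 1 ≤ s) (hn : 1 ≤ n) :
    ‖∑ j ∈ Finset.Icc 1 n,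
        ((y : ℚ_[p]) ^ (p ^ 2 * j) - (y : ℚ_[p]) ^ (p * j)) / (p * j)‖ ≤ 1 ∧
      ‖(∑ j ∈ Finset.Icc 1 n,
            ((y : ℚ_[p]) ^ (p ^ 2 * j) - (y : ℚ_[p]) ^ (p * j)) / (p * j)) -
          ∑ k ∈ Finset.Icc 1 (s - 1),
            (((y : ℚ_[p]) ^ (p * (p - 1)) - 1) / (p : ℚ_[p]) ^ 2) ^ k *
              (p : ℚ_[p]) ^ (2 * k - 1) / (k.factorial : ℚ_[p]) *
              ∑ j ∈ Finset.Icc 1 n,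
                ((y : ℚ_[p]) ^ (p * j) / (j : ℚ_[p])) *
                  ∏ i ∈ Finset.range k, ((j : ℚ_[p]) - (i : ℚ_[p]))‖ ≤
        (p : ℝ) ^ (-(s : ℤ)) :=
  Gn_not_rel_prime_part_general p y hy s n
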